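/- arXiv:1508.05280 — 2 statements merged into one kernel-verified Lean document; each statement's English description precedes it below -/
import Mathlib

section
/- J_0(S) is a closed subset of βS_d, and for every p ∈ J_0(S) and every q ∈ 0⁺(S), both q+p ∈ J_0(S) and p+q ∈ J_0(S); thus J_0(S) is a closed two-sided ideal of 0⁺(S). -/
open Set Filter

attribute [local instance] Ultrafilter.add

/-- `S` is a subsemigroup of `((0,∞),+)` which is dense in `(0,∞)`
    (with the usual topology of `ℝ`). -/
def DenseSubsemigroupPos (S : Set ℝ) : Prop :=
  (∀ x ∈ S, 0 < x) ∧ (∀ x ∈ S, ∀ y ∈ S, x + y ∈ S) ∧ Ioi (0 : ℝ) ⊆ closure S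

/-- `0⁺(S)`: the ultrafilters (on `S`, viewed as ultrafilters on `ℝ` containing `S`)
    all of whose members meet every interval `(0,ε)`. -/
def zeroPlus (S : Set ℝ) : Set (Ultrafilter ℝ) :=
  {p | ∀ ε > (0 : ℝ), Ioo (0 : ℝ) ε ∩ S ∈ p}

/-- `L` is a left ideal of the subsemigroup `T` of `βS_d`. -/
def IsLeftIdealIn (T L : Set (Ultrafilter ℝ)) : Prop :=
  L.Nonempty ∧ L ⊆ T ∧ ∀ p ∈ T, ∀ q ∈ L, p + q ∈ L

/-- `L` is a minimal left ideal of the subsemigroup `T` of `βS_d`. -/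
def IsMinimalLeftIdealIn (T L : Set (Ultrafilter ℝ)) : Prop :=
  IsLeftIdealIn T L ∧ ∀ L', IsLeftIdealIn T L' → L' ⊆ L → L' = L

/-- `K(T)`: the smallest two sided ideal of `T`, i.e. the union of all
    minimal left ideals of `T`. -/
def smallestIdeal (T : Set (Ultrafilter ℝ)) : Set (Ultrafilter ℝ) :=
  ⋃₀ {L | IsMinimalLeftIdealIn T L}

/-- `A` is thick near zero (as a subset of `S`). -/
def ThickNearZero (S A : Set ℝ) : Prop :=
  ∃ ε > (0 : ℝ), ∀ F : Finset ℝ, F.Nonempty → ↑F ⊆ Ioo (0 : ℝ) ε ∩ S →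
    ∀ δ > (0 : ℝ), ∃ y ∈ Ioo (0 : ℝ) δ ∩ S, ∀ x ∈ F, x + y ∈ A

/-- `A` is syndetic near zero (as a subset of `S`). -/
def SyndeticNearZero (S A : Set ℝ) : Prop :=
  ∀ ε > (0 : ℝ), ∃ F : Finset ℝ, F.Nonempty ∧ ↑F ⊆ Ioo (0 : ℝ) ε ∩ S ∧
    ∃ δ > (0 : ℝ), ∀ x ∈ Ioo (0 : ℝ) δ ∩ S, ∃ t ∈ F, t + x ∈ A

/-- `A` is piecewise syndetic near zero (as a subset of `S`). -/
def PiecewiseSyndeticNearZero (S A : Set ℝ) : Prop :=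
  ∀ δ > (0 : ℝ), ∃ F : Finset ℝ, F.Nonempty ∧ ↑F ⊆ Ioo (0 : ℝ) δ ∩ S ∧
    ThickNearZero S {y | y ∈ S ∧ ∃ t ∈ F, t + y ∈ A}

/-- `T_0`: sequences in `S` with infimum `0`. -/
def T0 (S : Set ℝ) : Set (ℕ → ℝ) :=
  {f | (∀ n, f n ∈ S) ∧ IsGLB (range f) 0}

/-- `A` is a `J`-set near zero (as a subset of `S`). -/
def JSetNearZero (S A : Set ℝ) : Prop :=
  ∀ F : Finset (ℕ → ℝ), F.Nonempty → ↑F ⊆ T0 S → ∀ δ > (0 : ℝ),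
    ∃ a ∈ S ∩ Ioo (0 : ℝ) δ, ∃ H : Finset ℕ, H.Nonempty ∧
      ∀ f ∈ F, a + ∑ t ∈ H, f t ∈ A

/-- `J_0(S)`: the members of `0⁺(S)` all of whose members are `J`-sets near zero. -/
def J0 (S : Set ℝ) : Set (Ultrafilter ℝ) :=
  {p | p ∈ zeroPlus S ∧ ∀ A : Set ℝ, A ⊆ S → A ∈ p → JSetNearZero S A}

/-- `A` is central near zero: it belongs to some idempotent in `K(0⁺(S))`. -/
def CentralNearZero (S A : Set ℝ) : Prop :=
  ∃ p : Ultrafilter ℝ, p + p = p ∧ p ∈ smallestIdeal (zeroPlus S) ∧ A ∈ p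

/-- `A` is a `C`-set near zero (it satisfies the conclusion of the Central Sets
    Theorem near zero). -/
def CSetNearZero (S A : Set ℝ) : Prop :=
  ∀ δ ∈ Ioo (0 : ℝ) 1,
    ∃ (α : Finset (ℕ → ℝ) → ℝ) (H : Finset (ℕ → ℝ) → Finset ℕ),
      (∀ F : Finset (ℕ → ℝ), F.Nonempty → ↑F ⊆ T0 S →
        α F ∈ S ∧ α F < δ ∧ (H F).Nonempty) ∧
      (∀ F G : Finset (ℕ → ℝ), F.Nonempty → ↑F ⊆ T0 S → G.Nonempty → ↑G ⊆ T0 S →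
        F ⊂ G → ∀ i ∈ H F, ∀ j ∈ H G, i < j) ∧
      (∀ m : ℕ, ∀ G : Fin (m + 1) → Finset (ℕ → ℝ), ∀ f : Fin (m + 1) → ℕ → ℝ,
        (∀ i, (G i).Nonempty) → (∀ i, ↑(G i) ⊆ T0 S) →
        (∀ i j, i < j → G i ⊂ G j) → (∀ i, f i ∈ G i) →
        ∑ i, (α (G i) + ∑ t ∈ H (G i), f i t) ∈ A)


/-!
Both ideal properties come from translating `J`-sets by small elements of `S`.
If `A ∈ q + p`, then `-x + A ∈ p` for some `x ∈ S` as small as we like, and shifting a witness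
`a` for the `J`-set `-x + A` to `x + a` gives a witness for `A`. If `A ∈ p + q`, the `J`-set
`B = {x | -x + A ∈ q}` lies in `p`; the finitely many points `a + ∑ t ∈ H, f t ∈ B`
have a common small translate `y` landing in `A`, and `a + y` is the witness for `A`.
`J0 S` is closed, being cut out by the basic closed sets `{p | A ∈ p}` and `{p | Aᶜ ∈ p}`.
-/

section JSet

variable {S A B : Set ℝ}

theorem JSetNearZero.mono (hAB : A ⊆ B) (hA : JSetNearZero S A) : JSetNearZero S B := by
  intro F hF hFT δ hδ
  obtain ⟨a, ha, H, hH, hmem⟩ := hA F hF hFT δ hδ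
  exact ⟨a, ha, H, hH, fun f hf => hAB (hmem f hf)⟩

theorem JSetNearZero.of_small_translates (hS : ∀ x ∈ S, ∀ y ∈ S, x + y ∈ S)
    (h : ∀ δ > (0 : ℝ), ∃ x ∈ S ∩ Ioo 0 δ, JSetNearZero S ((x + ·) ⁻¹' A)) :
    JSetNearZero S A := by
  intro F hF hFT δ hδ
  obtain ⟨x, ⟨hxS, hx0, hxδ⟩, hJ⟩ := h (δ / 2) (by linarith)
  obtain ⟨a, ⟨haS, ha0, haδ⟩, H, hH, hmem⟩ := hJ F hF hFT (δ / 2) (by linarith)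
  refine ⟨x + a, ⟨hS x hxS a haS, by linarith, by linarith⟩, H, hH, fun f hf => ?_⟩
  simpa only [mem_preimage, add_assoc] using hmem f hf

theorem JSetNearZero.of_eventually_translates (hS : ∀ x ∈ S, ∀ y ∈ S, x + y ∈ S)
    {q : Ultrafilter ℝ} (hq : q ∈ zeroPlus S) (hB : JSetNearZero S B)
    (h : ∀ x ∈ B, ∀ᶠ y in q, x + y ∈ A) : JSetNearZero S A := by
  intro F hF hFT δ hδ
  obtain ⟨a, ⟨haS, ha0, haδ⟩, H, hH, hmem⟩ := hB F hF hFT (δ / 2) (by linarith)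
  have hsmall : ∀ᶠ y in q, y ∈ Ioo 0 (δ / 2) ∩ S := hq (δ / 2) (by linarith)
  have htrans : ∀ᶠ y in q, ∀ f ∈ F, a + ∑ t ∈ H, f t + y ∈ A :=
    (F.eventually_all).2 fun f hf => h _ (hmem f hf)
  obtain ⟨y, ⟨⟨hy0, hyδ⟩, hyS⟩, hy⟩ := (hsmall.and htrans).exists
  refine ⟨a + y, ⟨hS a haS y hyS, by linarith, by linarith⟩, H, hH, fun f hf => ?_⟩
  simpa only [add_right_comm] using hy f hf

end JSet

section ZeroPlus

variable {S : Set ℝ} {p q : Ultrafilter ℝ}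

theorem isClosed_zeroPlus (S : Set ℝ) : IsClosed (zeroPlus S) := by
  simp only [zeroPlus, ofPred_forall]
  exact isClosed_iInter fun ε => isClosed_iInter fun _ => ultrafilter_isClosed_basic _

theorem add_mem_zeroPlus (hS : ∀ x ∈ S, ∀ y ∈ S, x + y ∈ S)
    (hp : p ∈ zeroPlus S) (hq : q ∈ zeroPlus S) : p + q ∈ zeroPlus S := by
  intro ε hε
  refine (Ultrafilter.eventually_add p q (· ∈ Ioo 0 ε ∩ S)).2 ?_
  filter_upwards [hp (ε / 2) (by linarith)] with x ⟨⟨hx0, hxε⟩, hxS⟩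
  filter_upwards [hq (ε / 2) (by linarith)] with y ⟨⟨hy0, hyε⟩, hyS⟩
  exact ⟨⟨by linarith, by linarith⟩, hS x hxS y hyS⟩

end ZeroPlus

section J0

variable {S A : Set ℝ} {p q : Ultrafilter ℝ}

theorem isClosed_J0 (S : Set ℝ) : IsClosed (J0 S) := by
  simp only [J0, ofPred_and, ofPred_forall]
  refine (isClosed_zeroPlus S).inter (isClosed_iInter fun A => isClosed_iInter fun _ => ?_)
  by_cases hA : JSetNearZero S A
  · simp only [hA, imp_true_iff, ofPred_true, isClosed_univ]
  · simpa only [hA, imp_false, ← Ultrafilter.compl_mem_iff_notMem]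
      using ultrafilter_isClosed_basic Aᶜ

theorem jSetNearZero_of_mem_J0 (hp : p ∈ J0 S) (hA : A ∈ p) : JSetNearZero S A := by
  have hSp : S ∈ p := mem_of_superset (hp.1 1 one_pos) inter_subset_right
  exact (hp.2 (A ∩ S) inter_subset_right (inter_mem hA hSp)).mono inter_subset_left

theorem add_mem_J0_left (hS : ∀ x ∈ S, ∀ y ∈ S, x + y ∈ S)
    (hq : q ∈ zeroPlus S) (hp : p ∈ J0 S) : q + p ∈ J0 S := by
  refine ⟨add_mem_zeroPlus hS hq hp.1, fun A _ hA => ?_⟩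
  refine JSetNearZero.of_small_translates hS fun δ hδ => ?_
  have hA' : ∀ᶠ x in q, (x + ·) ⁻¹' A ∈ p :=
    (Ultrafilter.eventually_add q p (· ∈ A)).1 hA
  obtain ⟨x, hx, hxδ, hxS⟩ := (hA'.and (hq δ hδ)).exists
  exact ⟨x, ⟨hxS, hxδ⟩, jSetNearZero_of_mem_J0 hp hx⟩

theorem add_mem_J0_right (hS : ∀ x ∈ S, ∀ y ∈ S, x + y ∈ S)
    (hp : p ∈ J0 S) (hq : q ∈ zeroPlus S) : p + q ∈ J0 S := by
  refine ⟨add_mem_zeroPlus hS hp.1 hq, fun A _ hA => ?_⟩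
  have hB : {x | ∀ᶠ y in q, x + y ∈ A} ∈ p :=
    (Ultrafilter.eventually_add p q (· ∈ A)).1 hA
  exact (jSetNearZero_of_mem_J0 hp hB).of_eventually_translates hS hq fun _ hx => hx

end J0

/-- `J_0(S)` is closed and is a two sided ideal of `0⁺(S)`. -/
theorem j0_isClosed_two_sided_ideal (S : Set ℝ) (hS : DenseSubsemigroupPos S) :
    IsClosed (J0 S) ∧
      ∀ p ∈ J0 S, ∀ q ∈ zeroPlus S, q + p ∈ J0 S ∧ p + q ∈ J0 S :=
  ⟨isClosed_J0 S, fun _ hp _ hq =>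
    ⟨add_mem_J0_left hS.2.1 hq hp, add_mem_J0_right hS.2.1 hp hq⟩⟩
end

section
/- If there exists an idempotent ultrafilter p (p+p = p) with p ∈ J_0(S) and A ∈ p, then A is a C-set near zero. -/
/-!
Fix `δ`. By strong recursion on `F` we choose `α(F) ∈ S ∩ (0, δ)`, a block `H(F)` lying beyond
every `H(G)` with `G ⊊ F`, and a set `C(F) ∈ p` with `C(F) ⊆ A` and `-x + C(F) ∈ p` for all
`x ∈ C(F)`, such that `α(F) + ∑_{t ∈ H(F)} f t ∈ C(F)` for `f ∈ F` and
`C(F) ⊆ -(α(G) + ∑_{t ∈ H(G)} f t) + C(G)` for `f ∈ G ⊊ F`. The set `C(F)` is the star set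
`D⋆ = {x ∈ D | -x + D ∈ p}` of the finite intersection `D` of `A` with these translates; it lies in
`p` because `p` is idempotent. Since `p ∈ J₀(S)`, `C(F)` is a `J`-set near zero, which gives `α(F)`
and `H(F)`; applying this to the tails of the `f ∈ F` pushes `H(F)` beyond the earlier blocks.
The sum along a chain `G₁ ⊊ ⋯ ⊊ Gₘ` then lies in `C(G₁) ⊆ A`, peeling off terms from the top.
-/

open Set Filter

attribute [local instance] Ultrafilter.add

section StarSet

variable {M : Type*} [AddSemigroup M] {p : Ultrafilter M} {A : Set M}

/-- The set `A⋆` of Hindman and Strauss. -/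
def Ultrafilter.starSet (p : Ultrafilter M) (A : Set M) : Set M :=
  {x ∈ A | (x + ·) ⁻¹' A ∈ p}

theorem Ultrafilter.starSet_subset : p.starSet A ⊆ A := fun _ hx => hx.1

theorem Ultrafilter.starSet_mem (hp : p + p = p) (hA : A ∈ p) : p.starSet A ∈ p := by
  rw [← hp] at hA
  exact inter_mem (hp ▸ hA) hA

theorem Ultrafilter.preimage_starSet_mem (hp : p + p = p) {x : M} (hx : x ∈ p.starSet A) :
    (x + ·) ⁻¹' p.starSet A ∈ p := by
  have h := hx.2
  rw [← hp] at h
  refine inter_mem (hp ▸ h) ?_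
  simp only [add_assoc]
  exact h

end StarSet

theorem Fin.sum_mem_of_subset_preimage {M : Type*} [AddCommMonoid M] :
    ∀ {m : ℕ} (x : Fin (m + 1) → M) (c : Fin (m + 1) → Set M), (∀ i, x i ∈ c i) →
      (∀ i j, i < j → c j ⊆ (x i + ·) ⁻¹' c i) → ∑ i, x i ∈ c 0
  | 0, x, c, hx, _ => by simpa using hx 0
  | m + 1, x, c, hx, hc => by
    rw [Fin.sum_univ_succ]
    refine hc 0 1 Fin.zero_lt_one ?_
    exact Fin.sum_mem_of_subset_preimage (fun i => x i.succ) (fun i => c i.succ) (fun i => hx _)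
      fun i j hij => hc _ _ (Fin.succ_lt_succ_iff.2 hij)

theorem Finset.exists_forall_of_strongInduction {α β : Type*} [Nonempty β]
    (Q : (Finset α → β) → Finset α → β → Prop)
    (hQ : ∀ g₁ g₂ F v, (∀ G ⊂ F, g₁ G = g₂ G) → Q g₁ F v → Q g₂ F v)
    (h : ∀ g F, (∀ G ⊂ F, Q g G (g G)) → ∃ v, Q g F v) :
    ∃ g : Finset α → β, ∀ F, Q g F (g F) := by
  classical
  let prev (g : Finset α → β) (F : Finset α) (G : Finset α) : β :=
    if G ⊂ F then g G else Classical.arbitrary β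
  let g : Finset α → β := Finset.strongInduction fun F rec =>
    Classical.epsilon (Q (fun G => if hG : G ⊂ F then rec G hG else Classical.arbitrary β) F)
  have hg F : g F = Classical.epsilon (Q (prev g F) F) := Finset.strongInduction_eq _ F
  have hprev F : ∀ G ⊂ F, prev g F G = g G := fun G hG => if_pos hG
  refine ⟨g, fun F => ?_⟩
  induction F using Finset.strongInduction with
  | H F ih =>
    have ih' : ∀ G ⊂ F, Q (prev g F) G (prev g F G) := fun G hG =>
      hprev F G hG ▸ hQ g _ G _ (fun K hK => (hprev F K (hK.trans hG)).symm) (ih G hG)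
    exact hQ _ g F _ (hprev F) (hg F ▸ Classical.epsilon_spec (h _ F ih'))

theorem T0_comp_succ {S : Set ℝ} (hS : ∀ x ∈ S, 0 < x) {f : ℕ → ℝ} (hf : f ∈ T0 S) :
    (fun n => f (n + 1)) ∈ T0 S := by
  refine ⟨fun n => hf.1 _, fun _ ⟨n, hn⟩ => hn ▸ hf.2.1 ⟨n + 1, rfl⟩, fun b hb => ?_⟩
  have hmin : min b (f 0) ∈ lowerBounds (range f) := by
    rintro _ ⟨_ | n, rfl⟩
    · exact min_le_right _ _
    · exact (min_le_left _ _).trans (hb ⟨n, rfl⟩)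
  exact (min_le_iff.1 (hf.2.2 hmin)).resolve_right (hS _ (hf.1 0)).not_ge

theorem T0_comp_add {S : Set ℝ} (hS : ∀ x ∈ S, 0 < x) {f : ℕ → ℝ} (hf : f ∈ T0 S)
    (k : ℕ) : (fun n => f (n + k)) ∈ T0 S := by
  induction k with
  | zero => exact hf
  | succ k ih => simpa only [add_assoc, add_comm 1 k] using T0_comp_succ hS ih

theorem JSetNearZero.exists_ge {S B : Set ℝ} (hS : ∀ x ∈ S, 0 < x) (hB : JSetNearZero S B)
    {F : Finset (ℕ → ℝ)} (hF : F.Nonempty) (hFT : ↑F ⊆ T0 S) {δ : ℝ} (hδ : 0 < δ) (k : ℕ) :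
    ∃ a ∈ S ∩ Ioo (0 : ℝ) δ, ∃ H : Finset ℕ, H.Nonempty ∧ (∀ j ∈ H, k ≤ j) ∧
      ∀ f ∈ F, a + ∑ t ∈ H, f t ∈ B := by
  classical
  have hshift : ↑(F.image fun f n => f (n + k)) ⊆ T0 S := by
    rw [Finset.coe_image, Set.image_subset_iff]
    exact fun f hf => T0_comp_add hS (hFT hf) k
  obtain ⟨a, ha, H, hH, hsum⟩ := hB _ (hF.image _) hshift δ hδ
  refine ⟨a, ha, H.map (addRightEmbedding k), hH.map, by simp, fun f hf => ?_⟩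
  rw [Finset.sum_map]
  exact hsum _ (Finset.mem_image_of_mem _ hf)

structure CStage where
  α : ℝ
  H : Finset ℕ
  C : Set ℝ

instance : Nonempty CStage := ⟨⟨0, ∅, ∅⟩⟩

namespace CStage

def eval (v : CStage) (f : ℕ → ℝ) : ℝ := v.α + ∑ t ∈ v.H, f t

variable (S A : Set ℝ) (p : Ultrafilter ℝ) (δ : ℝ)

structure IsGood (g : Finset (ℕ → ℝ) → CStage) (F : Finset (ℕ → ℝ)) (v : CStage) : Prop where
  α_mem : v.α ∈ S
  α_lt : v.α < δ
  H_nonempty : v.H.Nonempty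
  C_subset : v.C ⊆ A
  C_mem : v.C ∈ p
  preimage_C_mem : ∀ x ∈ v.C, (x + ·) ⁻¹' v.C ∈ p
  eval_mem : ∀ f ∈ F, v.eval f ∈ v.C
  lt_of_ssubset : ∀ G ⊂ F, ∀ i ∈ (g G).H, ∀ j ∈ v.H, i < j
  C_subset_preimage : ∀ G ⊂ F, ∀ f ∈ G, v.C ⊆ ((g G).eval f + ·) ⁻¹' (g G).C

variable {S A p δ}

theorem IsGood.congr {g₁ g₂ : Finset (ℕ → ℝ) → CStage} {F : Finset (ℕ → ℝ)} {v : CStage}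
    (h : ∀ G ⊂ F, g₁ G = g₂ G) (hv : v.IsGood S A p δ g₁ F) : v.IsGood S A p δ g₂ F where
  __ := hv
  lt_of_ssubset G hG := h G hG ▸ hv.lt_of_ssubset G hG
  C_subset_preimage G hG := h G hG ▸ hv.C_subset_preimage G hG

theorem exists_isGood (hS : ∀ x ∈ S, 0 < x) (hA : A ⊆ S) (hpp : p + p = p) (hpJ : p ∈ J0 S)
    (hAp : A ∈ p) (hδ : 0 < δ) (g : Finset (ℕ → ℝ) → CStage) {F : Finset (ℕ → ℝ)}
    (hF : F.Nonempty) (hFT : ↑F ⊆ T0 S)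
    (ih : ∀ G ⊂ F, G.Nonempty → (g G).IsGood S A p δ g G) :
    ∃ v : CStage, v.IsGood S A p δ g F := by
  classical
  set D := A ∩ ⋂ G ∈ F.ssubsets, ⋂ f ∈ G, ((g G).eval f + ·) ⁻¹' (g G).C
  have hD : D ∈ p := by
    refine inter_mem hAp <| (biInter_finset_mem _).2 fun G hG =>
      (biInter_finset_mem _).2 fun f hf => ?_
    have hG := ih G (Finset.mem_ssubsets.1 hG) ⟨f, hf⟩
    exact hG.preimage_C_mem _ (hG.eval_mem f hf)
  have hCS : p.starSet D ⊆ S := Ultrafilter.starSet_subset.trans (inter_subset_left.trans hA)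
  obtain ⟨k, hk⟩ := (F.ssubsets.biUnion fun G => (g G).H).bddAbove
  obtain ⟨a, ⟨haS, -, haδ⟩, H, hH, hHk, hsum⟩ :=
    (hpJ.2 _ hCS (Ultrafilter.starSet_mem hpp hD)).exists_ge hS hF hFT hδ (k + 1)
  refine ⟨⟨a, H, p.starSet D⟩, haS, haδ, hH, Ultrafilter.starSet_subset.trans inter_subset_left,
    Ultrafilter.starSet_mem hpp hD, fun x hx => Ultrafilter.preimage_starSet_mem hpp hx, hsum,
    fun G hG i hi j hj => ?_, fun G hG f hf x hx => ?_⟩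
  · exact (hk (Finset.mem_biUnion.2 ⟨G, Finset.mem_ssubsets.2 hG, hi⟩)).trans_lt (hHk j hj)
  · exact mem_iInter₂.1 (mem_iInter₂.1 (Ultrafilter.starSet_subset hx).2 G
      (Finset.mem_ssubsets.2 hG)) f hf

theorem exists_forall_isGood {S A : Set ℝ} {p : Ultrafilter ℝ} {δ : ℝ} (hS : ∀ x ∈ S, 0 < x)
    (hA : A ⊆ S) (hpp : p + p = p) (hpJ : p ∈ J0 S) (hAp : A ∈ p) (hδ : 0 < δ) :
    ∃ g : Finset (ℕ → ℝ) → CStage,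
      ∀ F, F.Nonempty → ↑F ⊆ T0 S → (g F).IsGood S A p δ g F := by
  refine Finset.exists_forall_of_strongInduction
    (fun g F (v : CStage) => F.Nonempty → ↑F ⊆ T0 S → v.IsGood S A p δ g F)
    (fun g₁ g₂ F v h hv hF hFT => (hv hF hFT).congr h) fun g F ih => ?_
  by_cases hF : F.Nonempty ∧ ↑F ⊆ T0 S
  · obtain ⟨v, hv⟩ := exists_isGood hS hA hpp hpJ hAp hδ g hF.1 hF.2
      fun G hG hGne => ih G hG hGne ((Finset.coe_subset.2 hG.subset).trans hF.2)
    exact ⟨v, fun _ _ => hv⟩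
  · exact ⟨⟨0, ∅, ∅⟩, fun hne hT => (hF ⟨hne, hT⟩).elim⟩

end CStage

/-- if `A` belongs to some idempotent of `J_0(S)`, then `A` is a
    `C`-set near zero. -/
theorem cSetNearZero_of_idempotent_j0 (S : Set ℝ) (hS : DenseSubsemigroupPos S)
    (A : Set ℝ) (hA : A ⊆ S) (p : Ultrafilter ℝ) (hpp : p + p = p)
    (hpJ : p ∈ J0 S) (hAp : A ∈ p) : CSetNearZero S A := by
  intro δ hδ
  obtain ⟨g, hg⟩ := CStage.exists_forall_isGood hS.1 hA hpp hpJ hAp hδ.1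
  refine ⟨fun F => (g F).α, fun F => (g F).H, fun F hF hFT => ?_,
    fun F G _ _ hG hGT hFG => (hg G hG hGT).lt_of_ssubset F hFG, fun m G f hne hT hmono hf => ?_⟩
  · exact ⟨(hg F hF hFT).α_mem, (hg F hF hFT).α_lt, (hg F hF hFT).H_nonempty⟩
  have hgood i := hg (G i) (hne i) (hT i)
  exact (hgood 0).C_subset <| Fin.sum_mem_of_subset_preimage (fun i => (g (G i)).eval (f i))
    (fun i => (g (G i)).C) (fun i => (hgood i).eval_mem _ (hf i))
    fun i j hij => (hgood j).C_subset_preimage _ (hmono i j hij) _ (hf i)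
end
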